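/- The second moment of P_{η}^{α} is P_{η}^{α}(t²; x) = x² + (x(2α+5)η + α² + 4α + 3)/η². -/

import Mathlib

open Real MeasureTheory Filter Set

/-- Generalized Laguerre polynomial `L_κ^{(α)}(x)`. -/
noncomputable def lag (κ : ℕ) (α x : ℝ) : ℝ :=
  ∑ ι ∈ Finset.range (κ + 1),
    (-1 : ℝ) ^ ι / (Nat.factorial ι) *
      ((∏ s ∈ Finset.range (κ - ι), (α + ι + 1 + s)) / (Nat.factorial (κ - ι))) * x ^ ι
/-- The operators `P_η^α(Φ; x)` based on modified Laguerre polynomials. -/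
noncomputable def Pop (η α : ℝ) (Φ : ℝ → ℝ) (x : ℝ) : ℝ :=
  Real.exp (-(η * x) / 2) * (2 : ℝ) ^ (-α - 1) *
    ∑' κ : ℕ, (2 : ℝ) ^ (-(κ : ℝ)) * lag κ α (-(η * x) / 2) * Φ ((κ : ℝ) / η)

/-! Expanding `L_κ^{(α)}(-y) = ∑_{ι + m = κ} y^ι/ι! · (α+ι+1)_m/m!` turns the series into a double
series whose terms are nonnegative when `y ≥ 0` and `α > -1`, so it can be summed over `m` first.
The inner sums are factorial moments of the negative binomial series
`∑ (β)_m/m! · t^m = (1-t)^{-β}` at `t = 1/2`, the outer ones factorial moments of the exponential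
series; for `y = ηx/2` the factors `e^{±y}` and `2^{±(α+1)}` then cancel. -/

open Finset
open scoped Nat

lemma hasSum_prod_of_nonneg {ι κ : Type*} {f : ι × κ → ℝ} {g : ι → ℝ} {a : ℝ} (hf : 0 ≤ f)
    (hrow : ∀ i, HasSum (fun j ↦ f (i, j)) (g i)) (hg : HasSum g a) : HasSum f a := by
  have hsum : Summable f := (summable_prod_of_nonneg hf).mpr
    ⟨fun i ↦ (hrow i).summable, hg.summable.congr fun i ↦ (hrow i).tsum_eq.symm⟩
  rw [hg.unique (hsum.hasSum.prod_fiberwise hrow)]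
  exact hsum.hasSum

lemma HasSum.sum_antidiagonal {A M : Type*} [AddMonoid A] [HasAntidiagonal A] [AddCommMonoid M]
    [TopologicalSpace M] [ContinuousAdd M] [RegularSpace M] {f : A × A → M} {a : M}
    (hf : HasSum f a) :
    HasSum (fun n ↦ ∑ p ∈ antidiagonal n, f p) a :=
  ((HasAntidiagonal.sigmaAntidiagonalEquivProd.hasSum_iff).mpr hf).sigma fun n ↦ by
    rw [← sum_coe_sort]
    exact hasSum_fintype _

lemma ascPochhammer_eval_eq_prod_range {R : Type*} [CommSemiring R] (r : R) (m : ℕ) :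
    (ascPochhammer R m).eval r = ∏ s ∈ range m, (r + s) := by
  induction m with
  | zero => simp
  | succ m ih => simp [ascPochhammer_succ_right, ih, prod_range_succ]

lemma factorial_mul_descFactorial_add (m k : ℕ) :
    (m ! : ℝ) * (m + k).descFactorial k = (m + k) ! := by
  exact_mod_cast (by simpa using Nat.factorial_mul_descFactorial (Nat.le_add_left k m))

noncomputable def negBinomCoeff (β : ℝ) (m : ℕ) : ℝ := (∏ s ∈ range m, (β + s)) / m !

lemma negBinomCoeff_nonneg {β : ℝ} (hβ : 0 ≤ β) (m : ℕ) : 0 ≤ negBinomCoeff β m :=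
  div_nonneg (prod_nonneg fun _ _ ↦ by positivity) (by positivity)

lemma negBinomCoeff_eq_ringChoose (β : ℝ) (m : ℕ) :
    negBinomCoeff β m = Ring.choose (β + m - 1) m := by
  rw [Ring.choose_eq_smul, Polynomial.descPochhammer_smeval_eq_ascPochhammer,
    Polynomial.ascPochhammer_smeval_eq_eval, show β + m - 1 - m + 1 = β by ring,
    ascPochhammer_eval_eq_prod_range, negBinomCoeff, smul_eq_mul, div_eq_inv_mul]

lemma hasSum_negBinomCoeff_mul_pow (β : ℝ) {t : ℝ} (ht : |t| < 1) :
    HasSum (fun m ↦ negBinomCoeff β m * t ^ m) ((1 - t) ^ (-β)) := by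
  have ht' : t ∈ Metric.eball (0 : ℝ) 1 := by simpa [edist_dist] using ht
  have := (Real.one_div_one_sub_rpow_hasFPowerSeriesOnBall_zero β).hasSum ht'
  simpa [negBinomCoeff_eq_ringChoose, FormalMultilinearSeries.ofScalars_apply_eq, mul_comm,
    Real.rpow_neg (by linarith [abs_lt.mp ht] : (0 : ℝ) ≤ 1 - t)] using this

lemma descFactorial_mul_negBinomCoeff (β : ℝ) (m k : ℕ) :
    ((m + k).descFactorial k : ℝ) * negBinomCoeff β (m + k) =
      (∏ s ∈ range k, (β + s)) * negBinomCoeff (β + k) m := by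
  have hm : (m ! : ℝ) ≠ 0 := by positivity
  have hprod : ∏ s ∈ range (m + k), (β + s) =
      (∏ s ∈ range k, (β + s)) * ∏ s ∈ range m, (β + k + s) := by
    rw [add_comm, prod_range_add]
    simp only [Nat.cast_add, add_assoc]
  rw [negBinomCoeff, negBinomCoeff, hprod, ← factorial_mul_descFactorial_add]
  field_simp

lemma hasSum_descFactorial_mul_negBinomCoeff_mul_pow (β : ℝ) (k : ℕ) {t : ℝ} (ht : |t| < 1) :
    HasSum (fun m ↦ (m.descFactorial k : ℝ) * negBinomCoeff β m * t ^ m)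
      ((∏ s ∈ range k, (β + s)) * t ^ k * (1 - t) ^ (-(β + k))) := by
  rw [← hasSum_nat_add_iff' k, sum_eq_zero fun i hi ↦ by
    rw [Nat.descFactorial_eq_zero_iff_lt.mpr (mem_range.mp hi)]; simp, sub_zero]
  have hshift :
      (fun m ↦ (((m + k).descFactorial k : ℕ) : ℝ) * negBinomCoeff β (m + k) * t ^ (m + k)) =
      fun m ↦ (∏ s ∈ range k, (β + s)) * t ^ k * (negBinomCoeff (β + k) m * t ^ m) := by
    funext m
    rw [pow_add, descFactorial_mul_negBinomCoeff]
    ring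
  rw [hshift]
  exact (hasSum_negBinomCoeff_mul_pow (β + k) ht).mul_left _

lemma hasSum_descFactorial_mul_negBinomCoeff_mul_half_pow (β : ℝ) (k : ℕ) :
    HasSum (fun m ↦ (m.descFactorial k : ℝ) * negBinomCoeff β m * (1 / 2) ^ m)
      ((∏ s ∈ range k, (β + s)) * 2 ^ β) := by
  convert hasSum_descFactorial_mul_negBinomCoeff_mul_pow β k (t := 1 / 2) (by norm_num) using 1
  rw [show (1 : ℝ) - 1 / 2 = 2⁻¹ by norm_num, Real.inv_rpow zero_le_two, rpow_neg zero_le_two,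
    inv_inv, rpow_add two_pos, rpow_natCast, one_div, inv_pow]
  field_simp

lemma hasSum_add_sq_mul_negBinomCoeff_mul_half_pow (β : ℝ) (i : ℕ) :
    HasSum (fun m ↦ ((i : ℝ) + m) ^ 2 * (negBinomCoeff β m * (1 / 2) ^ m))
      (2 ^ β * (i ^ 2 + (2 * i + 1) * β + β * (β + 1))) := by
  have h := (((hasSum_descFactorial_mul_negBinomCoeff_mul_half_pow β 0).mul_left ((i : ℝ) ^ 2)).add
    ((hasSum_descFactorial_mul_negBinomCoeff_mul_half_pow β 1).mul_left (2 * (i : ℝ) + 1))).add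
    (hasSum_descFactorial_mul_negBinomCoeff_mul_half_pow β 2)
  simp only [Finset.prod_range_succ, Finset.prod_range_zero, Nat.descFactorial_zero,
    Nat.descFactorial_one, Nat.cast_descFactorial_two, Nat.cast_zero, Nat.cast_one, add_zero,
    one_mul] at h
  rw [show 2 ^ β * (i ^ 2 + (2 * i + 1) * β + β * (β + 1)) =
    (i : ℝ) ^ 2 * 2 ^ β + (2 * i + 1) * (β * 2 ^ β) + β * (β + 1) * 2 ^ β by ring]
  exact h.congr_fun fun m ↦ by ring

lemma hasSum_descFactorial_mul_pow_div_factorial (y : ℝ) (k : ℕ) :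
    HasSum (fun n ↦ (n.descFactorial k : ℝ) * (y ^ n / n !)) (y ^ k * exp y) := by
  rw [← hasSum_nat_add_iff' k, sum_eq_zero fun i hi ↦ by
    rw [Nat.descFactorial_eq_zero_iff_lt.mpr (mem_range.mp hi)]; simp, sub_zero]
  have hshift : (fun m ↦ (((m + k).descFactorial k : ℕ) : ℝ) * (y ^ (m + k) / (m + k) !)) =
      fun m ↦ y ^ k * (y ^ m / m !) := by
    funext m
    have hm : (m ! : ℝ) ≠ 0 := by positivity
    have hd : ((m + k).descFactorial k : ℝ) ≠ 0 := by
      exact_mod_cast (Nat.descFactorial_pos.mpr (Nat.le_add_left k m)).ne'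
    rw [← factorial_mul_descFactorial_add, pow_add]
    field_simp
  rw [hshift, Real.exp_eq_exp_ℝ]
  exact (NormedSpace.expSeries_div_hasSum_exp y).mul_left _

lemma hasSum_pow_div_factorial_mul_quadratic (y a b c : ℝ) :
    HasSum (fun n : ℕ ↦ (a * n ^ 2 + b * n + c) * (y ^ n / n !))
      ((a * y ^ 2 + (a + b) * y + c) * exp y) := by
  have h := (((hasSum_descFactorial_mul_pow_div_factorial y 2).mul_left a).add
    ((hasSum_descFactorial_mul_pow_div_factorial y 1).mul_left (a + b))).add
    ((hasSum_descFactorial_mul_pow_div_factorial y 0).mul_left c)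
  simp only [Nat.descFactorial_zero, Nat.descFactorial_one, Nat.cast_descFactorial_two,
    Nat.cast_one, one_mul, pow_one, pow_zero] at h
  rw [show (a * y ^ 2 + (a + b) * y + c) * exp y =
    a * (y ^ 2 * exp y) + (a + b) * (y * exp y) + c * exp y by ring]
  exact h.congr_fun fun n ↦ by ring

lemma lag_neg (κ : ℕ) (α y : ℝ) :
    lag κ α (-y) = ∑ p ∈ antidiagonal κ, y ^ p.1 / p.1 ! * negBinomCoeff (α + p.1 + 1) p.2 := by
  rw [lag, Nat.sum_antidiagonal_eq_sum_range_succ_mk]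
  refine sum_congr rfl fun i _ ↦ ?_
  rw [neg_pow y, mul_mul_mul_comm, div_mul_eq_mul_div, ← mul_pow, neg_one_mul, neg_neg, one_pow,
    negBinomCoeff]
  ring

lemma hasSum_half_pow_mul_lag_neg_mul_sq {α y : ℝ} (hα : -1 < α) (hy : 0 ≤ y) :
    HasSum (fun κ : ℕ ↦ (1 / 2) ^ κ * lag κ α (-y) * (κ : ℝ) ^ 2)
      (2 ^ (α + 1) * ((4 * y ^ 2 + (4 * α + 10) * y + (α + 1) * (α + 3)) * exp y)) := by
  set F : ℕ × ℕ → ℝ := fun p ↦ y ^ p.1 / p.1 ! * (1 / 2) ^ p.1 *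
    (((p.1 : ℝ) + p.2) ^ 2 * (negBinomCoeff (α + p.1 + 1) p.2 * (1 / 2) ^ p.2))
  have hF_nonneg : 0 ≤ F := fun p ↦ by
    have := negBinomCoeff_nonneg (β := α + p.1 + 1) (by linarith [p.1.cast_nonneg (α := ℝ)]) p.2
    show (0 : ℝ) ≤ F p
    positivity
  have hrow (i : ℕ) : HasSum (fun m ↦ F (i, m)) (y ^ i / i ! * (1 / 2) ^ i *
      (2 ^ (α + i + 1) * (i ^ 2 + (2 * i + 1) * (α + i + 1) + (α + i + 1) * (α + i + 1 + 1)))) :=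
    (hasSum_add_sq_mul_negBinomCoeff_mul_half_pow _ i).mul_left _
  have hcol : HasSum (fun i : ℕ ↦ y ^ i / i ! * (1 / 2) ^ i *
      (2 ^ (α + i + 1) * (i ^ 2 + (2 * i + 1) * (α + i + 1) + (α + i + 1) * (α + i + 1 + 1))))
      (2 ^ (α + 1) * ((4 * y ^ 2 + (4 * α + 10) * y + (α + 1) * (α + 3)) * exp y)) := by
    -- with `β = α + i + 1`: `i² + (2i + 1)β + β(β + 1) = 4i² + (4α + 6)i + (α + 1)(α + 3)`
    have h := (hasSum_pow_div_factorial_mul_quadratic y 4 (4 * α + 6) ((α + 1) * (α + 3))).mul_left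
      ((2 : ℝ) ^ (α + 1))
    rw [show 4 * α + 10 = 4 + (4 * α + 6) by ring]
    refine h.congr_fun fun i ↦ ?_
    rw [show α + i + 1 = (α + 1) + i by ring, rpow_add two_pos, rpow_natCast, one_div, inv_pow]
    field_simp
    ring
  refine (hasSum_prod_of_nonneg hF_nonneg hrow hcol).sum_antidiagonal.congr_fun fun κ ↦ ?_
  rw [lag_neg, mul_sum, sum_mul]
  refine sum_congr rfl fun p hp ↦ ?_
  rw [HasAntidiagonal.mem_antidiagonal] at hp
  dsimp only [F]
  rw [← hp, pow_add]
  push_cast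
  ring

/-- The second moment of `P_η^α`. -/
theorem stmt5 (α η x : ℝ) (hα : -1 < α) (hη : 0 < η) (hx : 0 ≤ x) :
    Pop η α (fun t => t ^ 2) x =
      x ^ 2 + (x * (2 * α + 5) * η + α ^ 2 + 4 * α + 3) / η ^ 2 := by
  have hsum := (hasSum_half_pow_mul_lag_neg_mul_sq hα (by positivity : 0 ≤ η * x / 2)).div_const
    (η ^ 2)
  have hterm (κ : ℕ) : (2 : ℝ) ^ (-(κ : ℝ)) * lag κ α (-(η * x) / 2) * ((κ : ℝ) / η) ^ 2 =
      (1 / 2) ^ κ * lag κ α (-(η * x / 2)) * (κ : ℝ) ^ 2 / η ^ 2 := by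
    rw [rpow_neg zero_le_two, rpow_natCast, neg_div, one_div, inv_pow]
    ring
  have hexp : exp (-(η * x) / 2) * exp (η * x / 2) = 1 := by
    rw [← Real.exp_add, neg_div, neg_add_cancel, Real.exp_zero]
  have htwo : (2 : ℝ) ^ (-α - 1) * 2 ^ (α + 1) = 1 := by
    rw [← rpow_add two_pos, show -α - 1 + (α + 1) = 0 by ring, rpow_zero]
  simp only [Pop]
  rw [tsum_congr hterm, hsum.tsum_eq]
  calc _ = exp (-(η * x) / 2) * exp (η * x / 2) * ((2 : ℝ) ^ (-α - 1) * 2 ^ (α + 1)) *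
        (4 * (η * x / 2) ^ 2 + (4 * α + 10) * (η * x / 2) + (α + 1) * (α + 3)) / η ^ 2 := by ring
    _ = _ := by
      rw [hexp, htwo]
      field_simp
      ring
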